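/- For the sum of loop values in the blossom dynamics, S(t) = Σ_{i=1}^m y_i(t) satisfies S(t+1) = S(t) − (y_1(t)+y_m(t))/2 + 1/2; consequently, since y_1(t)+y_m(t) evolves autonomously of the stem values, S(t) also evolves autonomously of the stem values. -/
import Mathlib

lemma shift2_sum (a : ℕ → ℝ) (n : ℕ) :
    ∑ i ∈ Finset.range (n + 2), a i
      = a 0 + a 1 + ∑ i ∈ Finset.range n, a (i + 2) := by
  rw [Finset.sum_range_succ', Finset.sum_range_succ']
  ring

/-- For the blossom loop dynamics, S(t) = Σ_{i=1}^m y_i(t) satisfies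
S(t+1) = S(t) − (y_1(t)+y_m(t))/2 + 1/2, hence evolves autonomously of the
stem values x(t). -/
theorem blossom_loop_sum_recursion (m : ℕ) (hm : 2 ≤ m)
    (x : ℕ → ℝ) (y : ℕ → Fin m → ℝ)
    (h1 : ∀ t, y (t + 1) ⟨0, by omega⟩ = (x t + y t ⟨1, by omega⟩) / 2)
    (hmid : ∀ t, ∀ i : ℕ, ∀ _h1 : 0 < i, ∀ _h2 : i < m - 1,
      y (t + 1) ⟨i, by omega⟩
        = (y t ⟨i - 1, by omega⟩ + y t ⟨i + 1, by omega⟩) / 2)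
    (hlast : ∀ t, y (t + 1) ⟨m - 1, by omega⟩
      = (1 + y t ⟨m - 2, by omega⟩ - x t) / 2) :
    ∀ t, (∑ i, y (t + 1) i)
      = (∑ i, y t i) - (y t ⟨0, by omega⟩ + y t ⟨m - 1, by omega⟩) / 2
        + 1 / 2 := by
  obtain ⟨n, rfl⟩ : ∃ n, m = n + 2 := ⟨m - 2, by omega⟩
  intro t
  set a : ℕ → ℝ := fun i => y t ⟨i % (n + 2), Nat.mod_lt _ (by omega)⟩ with ha
  set b : ℕ → ℝ := fun i => y (t + 1) ⟨i % (n + 2), Nat.mod_lt _ (by omega)⟩ with hb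
  have hconv : ∀ u, (∑ i, y u i)
      = ∑ i ∈ Finset.range (n + 2), y u ⟨i % (n + 2), Nat.mod_lt _ (by omega)⟩ := by
    intro u
    rw [← Fin.sum_univ_eq_sum_range]
    refine Finset.sum_congr rfl fun i _ => ?_
    congr 1
    exact Fin.ext (Nat.mod_eq_of_lt i.isLt).symm
  have hb0 : b 0 = (x t + a 1) / 2 := by
    have e1 : 1 % (n + 2) = 1 := Nat.mod_eq_of_lt (by omega)
    simp only [hb, ha, Nat.zero_mod, e1]
    exact h1 t
  have hbmid : ∀ i < n, b (i + 1) = (a i + a (i + 2)) / 2 := by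
    intro i hi
    have e1 : (i + 1) % (n + 2) = i + 1 := Nat.mod_eq_of_lt (by omega)
    have e2 : i % (n + 2) = i := Nat.mod_eq_of_lt (by omega)
    have e3 : (i + 2) % (n + 2) = i + 2 := Nat.mod_eq_of_lt (by omega)
    simp only [hb, ha, e1, e2, e3]
    have := hmid t (i + 1) (by omega) (by omega)
    simpa using this
  have hbl : b (n + 1) = (1 + a n - x t) / 2 := by
    have e1 : (n + 1) % (n + 2) = n + 1 := Nat.mod_eq_of_lt (by omega)
    have e2 : n % (n + 2) = n := Nat.mod_eq_of_lt (by omega)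
    simp only [hb, ha, e1, e2]
    have := hlast t
    simpa using this
  have hA : (∑ i, y t i) = ∑ i ∈ Finset.range (n + 2), a i := hconv t
  have hB : (∑ i, y (t + 1) i) = ∑ i ∈ Finset.range (n + 2), b i := hconv (t + 1)
  have hy0 : y t ⟨0, by omega⟩ = a 0 := by
    simp [ha]
  have hyl : y t ⟨n + 2 - 1, by omega⟩ = a (n + 1) := by
    simp only [ha]; congr 1
    exact Fin.ext (by simp [Nat.mod_eq_of_lt])
  rw [hA, hB, hy0, hyl]
  rw [Finset.sum_range_succ, Finset.sum_range_succ']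
  have hmidsum : ∑ i ∈ Finset.range n, b (i + 1)
      = ((∑ i ∈ Finset.range n, a i) + ∑ i ∈ Finset.range n, a (i + 2)) / 2 := by
    rw [← Finset.sum_add_distrib, Finset.sum_div]
    exact Finset.sum_congr rfl fun i hi => hbmid i (Finset.mem_range.mp hi)
  have hS2 : ∑ i ∈ Finset.range n, a (i + 2)
      = (∑ i ∈ Finset.range (n + 2), a i) - a 0 - a 1 := by
    rw [shift2_sum a n]; ring
  have hS1 : ∑ i ∈ Finset.range n, a i
      = (∑ i ∈ Finset.range (n + 2), a i) - a n - a (n + 1) := by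
    rw [Finset.sum_range_succ, Finset.sum_range_succ]; ring
  rw [hmidsum, hS1, hS2, hb0, hbl]
  ring
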